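/- Let 𝔄 be an amenable Banach algebra and let 𝔍 be a closed two-sided ideal of 𝔄 possessing a bounded approximate identity. Then 𝔍 is itself an amenable Banach algebra. -/

import Mathlib

/-!
For `e ∈ J` the sandwich map `ψₑ (a ⊗ b) = e a ⊗ b e` sends `A ⊗ A` into `J ⊗ J`, maps `ker Δ_A`
into `ker Δ_J` (as `Δ (ψₑ r) = e Δ(r) e`) and multiplies projective norms by at most `‖e‖²`.
Given `u = ∑ pᵢ ⊗ p'ᵢ ∈ ker Δ_J`, take `r ∈ ker Δ_A` with `u r ≈ u` in `A ⊗̂ A`, then `e` from the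
bounded approximate identity of `J` almost fixing, hence almost commuting with, every `pᵢ, p'ᵢ`.
Then `u ψₑ(r) ≈ ψₑ(u r) ≈ ψₑ(u) ≈ u` in `J ⊗̂ J`, with errors controlled by `‖e‖`, the projective
norm of `r` and `∑ ‖pᵢ‖ + ‖p'ᵢ‖`, so the `ψₑ(r)` form a bounded right approximate identity
of `ker Δ_J`.
-/

open scoped TensorProduct

/-- The multiplication of `A ⊗ Aᵒᵖ` on the algebraic tensor product:
`(a ⊗ b) • (c ⊗ d) = (a * c) ⊗ (d * b)`. -/
noncomputable def opMul (A : Type*) [NonUnitalNormedRing A] [NormedSpace ℂ A]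
    [IsScalarTower ℂ A A] [SMulCommClass ℂ A A] :
    (A ⊗[ℂ] A) →ₗ[ℂ] (A ⊗[ℂ] A) →ₗ[ℂ] (A ⊗[ℂ] A) :=
  TensorProduct.lift <|
    LinearMap.compl₂
      ((TensorProduct.mapBilinear (RingHom.id ℂ) A A A A).comp (LinearMap.mul ℂ A))
      ((LinearMap.mul ℂ A).flip)

/-- The projective tensor norm on the algebraic tensor product `A ⊗ A`. -/
noncomputable def projNorm (A : Type*) [NonUnitalNormedRing A] [NormedSpace ℂ A]
    [IsScalarTower ℂ A A] [SMulCommClass ℂ A A] (u : A ⊗[ℂ] A) : ℝ :=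
  sInf { c : ℝ | ∃ l : List (A × A),
    (l.map fun p => p.1 ⊗ₜ[ℂ] p.2).sum = u ∧ (l.map fun p => ‖p.1‖ * ‖p.2‖).sum = c }

/-- Amenability of a Banach algebra `A` (Helemskiĭ's characterization): `A`
has a bounded approximate identity and the left ideal `ker Δ` of `A ⊗̂ Aᵒᵖ`
has a bounded right approximate identity. -/
def IsAmenable (A : Type*) [NonUnitalNormedRing A] [NormedSpace ℂ A]
    [IsScalarTower ℂ A A] [SMulCommClass ℂ A A] : Prop :=
  (∃ C > (0 : ℝ), ∀ ε > (0 : ℝ), ∀ S : Finset A, ∃ e : A, ‖e‖ ≤ C ∧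
      ∀ x ∈ S, ‖e * x - x‖ < ε ∧ ‖x * e - x‖ < ε) ∧
  (∃ C > (0 : ℝ), ∀ ε > (0 : ℝ), ∀ S : Finset (A ⊗[ℂ] A),
      (∀ u ∈ S, u ∈ LinearMap.ker (LinearMap.mul' ℂ A)) →
      ∃ r ∈ LinearMap.ker (LinearMap.mul' ℂ A), projNorm A r ≤ C ∧
        ∀ u ∈ S, projNorm A (opMul A u r - u) < ε)

open TensorProduct

lemma TensorProduct.exists_list_sum_tmul_eq {R M N : Type*} [CommSemiring R] [AddCommMonoid M]
    [AddCommMonoid N] [Module R M] [Module R N] (u : M ⊗[R] N) :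
    ∃ l : List (M × N), (l.map fun p => p.1 ⊗ₜ[R] p.2).sum = u := by
  induction u using TensorProduct.induction_on with
  | zero => exact ⟨[], rfl⟩
  | tmul x y => exact ⟨[(x, y)], by simp⟩
  | add u v hu hv =>
    obtain ⟨l₁, rfl⟩ := hu
    obtain ⟨l₂, rfl⟩ := hv
    exact ⟨l₁ ++ l₂, by simp⟩

section ProjNorm

variable {A B : Type*} [NonUnitalNormedRing A] [NormedSpace ℂ A] [IsScalarTower ℂ A A]
  [SMulCommClass ℂ A A] [NonUnitalNormedRing B] [NormedSpace ℂ B] [IsScalarTower ℂ B B]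
  [SMulCommClass ℂ B B]

lemma projNorm_le_of_list (l : List (A × A)) :
    projNorm A (l.map fun p => p.1 ⊗ₜ[ℂ] p.2).sum ≤ (l.map fun p => ‖p.1‖ * ‖p.2‖).sum := by
  refine csInf_le ⟨0, ?_⟩ ⟨l, rfl, rfl⟩
  rintro c ⟨l', -, rfl⟩
  exact List.sum_nonneg fun x hx => by
    obtain ⟨p, -, rfl⟩ := List.mem_map.mp hx
    positivity

lemma projNorm_nonneg (u : A ⊗[ℂ] A) : 0 ≤ projNorm A u := by
  refine Real.sInf_nonneg ?_
  rintro c ⟨l, -, rfl⟩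
  exact List.sum_nonneg fun x hx => by
    obtain ⟨p, -, rfl⟩ := List.mem_map.mp hx
    positivity

lemma exists_list_of_projNorm_lt {u : A ⊗[ℂ] A} {c : ℝ} (h : projNorm A u < c) :
    ∃ l : List (A × A), (l.map fun p => p.1 ⊗ₜ[ℂ] p.2).sum = u ∧
      (l.map fun p => ‖p.1‖ * ‖p.2‖).sum < c := by
  obtain ⟨l₀, rfl⟩ := exists_list_sum_tmul_eq u
  obtain ⟨_, ⟨l, hl, rfl⟩, hlc⟩ := exists_lt_of_csInf_lt (by exact ⟨_, l₀, rfl, rfl⟩) h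
  exact ⟨l, hl, hlc⟩

lemma projNorm_zero : projNorm A 0 = 0 :=
  le_antisymm (by simpa using projNorm_le_of_list ([] : List (A × A))) (projNorm_nonneg 0)

lemma projNorm_tmul_le (a b : A) : projNorm A (a ⊗ₜ[ℂ] b) ≤ ‖a‖ * ‖b‖ := by
  simpa using projNorm_le_of_list [(a, b)]

lemma projNorm_add_le (u v : A ⊗[ℂ] A) : projNorm A (u + v) ≤ projNorm A u + projNorm A v := by
  refine le_of_forall_pos_lt_add fun ε hε => ?_
  obtain ⟨l₁, rfl, hl₁⟩ := exists_list_of_projNorm_lt (lt_add_of_pos_right (projNorm A u)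
    (half_pos hε))
  obtain ⟨l₂, rfl, hl₂⟩ := exists_list_of_projNorm_lt (lt_add_of_pos_right (projNorm A v)
    (half_pos hε))
  calc projNorm A (_ + _) ≤ ((l₁ ++ l₂).map fun p => ‖p.1‖ * ‖p.2‖).sum := by
        simpa using projNorm_le_of_list (l₁ ++ l₂)
    _ < _ := by simp only [List.map_append, List.sum_append]; linarith

lemma projNorm_list_sum_le (l : List (A ⊗[ℂ] A)) :
    projNorm A l.sum ≤ (l.map (projNorm A)).sum :=
  List.le_sum_of_subadditive _ projNorm_zero.le projNorm_add_le l

lemma projNorm_map_le (f g : A →ₗ[ℂ] B) {c : ℝ} (hc : 0 ≤ c)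
    (hfg : ∀ x y, ‖f x‖ * ‖g y‖ ≤ c * (‖x‖ * ‖y‖)) (u : A ⊗[ℂ] A) :
    projNorm B (map f g u) ≤ c * projNorm A u := by
  obtain ⟨l₀, rfl⟩ := exists_list_sum_tmul_eq u
  show _ ≤ c • sInf (_ : Set ℝ)
  refine (le_csInf (by exact ⟨_, _, ⟨l₀, rfl, rfl⟩, rfl⟩) ?_).trans_eq
    (Real.sInf_smul_of_nonneg hc _)
  rintro _ ⟨_, ⟨l, hl, rfl⟩, rfl⟩
  rw [← hl]
  calc projNorm B (map f g (l.map fun p => p.1 ⊗ₜ[ℂ] p.2).sum)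
      ≤ (l.map fun p => ‖f p.1‖ * ‖g p.2‖).sum := by
        simpa [map_list_sum, Function.comp_def] using
          projNorm_le_of_list (l.map fun p => (f p.1, g p.2))
    _ ≤ (l.map fun p => c * (‖p.1‖ * ‖p.2‖)).sum := List.sum_le_sum fun p _ => hfg p.1 p.2
    _ = c • (l.map fun p => ‖p.1‖ * ‖p.2‖).sum := by rw [List.sum_map_mul_left, smul_eq_mul]

lemma projNorm_map_list_sum_le {M ι : Type*} [AddCommMonoid M] [Module ℂ M]
    (Φ : M →ₗ[ℂ] A ⊗[ℂ] A) (l : List ι) (f : ι → M) (w : ι → ℝ)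
    (h : ∀ i ∈ l, projNorm A (Φ (f i)) ≤ w i) :
    projNorm A (Φ (l.map f).sum) ≤ (l.map w).sum := by
  rw [map_list_sum, List.map_map]
  refine (projNorm_list_sum_le _).trans ?_
  rw [List.map_map]
  exact List.sum_le_sum h

end ProjNorm

section ApproxUnit

variable {R : Type*} [NonUnitalNormedRing R]

def ApproxUnitAt (δ : ℝ) (e x : R) : Prop := ‖e * x - x‖ < δ ∧ ‖x * e - x‖ < δ

lemma ApproxUnitAt.norm_commutator_le {δ : ℝ} {e x : R} (h : ApproxUnitAt δ e x) :
    ‖x * e - e * x‖ ≤ 2 * δ := by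
  have := norm_sub_le_norm_sub_add_norm_sub (x * e) x (e * x)
  rw [norm_sub_rev x] at this
  linarith [h.1, h.2]

end ApproxUnit

def HasBddApproxUnit (R : Type*) [NonUnitalNormedRing R] : Prop :=
  ∃ C > (0 : ℝ), ∀ ε > (0 : ℝ), ∀ S : Finset R, ∃ e : R, ‖e‖ ≤ C ∧ ∀ x ∈ S, ApproxUnitAt ε e x

def HasBddRightApproxUnitKerMul (A : Type*) [NonUnitalNormedRing A] [NormedSpace ℂ A]
    [IsScalarTower ℂ A A] [SMulCommClass ℂ A A] : Prop :=
  ∃ C > (0 : ℝ), ∀ ε > (0 : ℝ), ∀ S : Finset (A ⊗[ℂ] A),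
    (∀ u ∈ S, u ∈ LinearMap.ker (LinearMap.mul' ℂ A)) →
    ∃ r ∈ LinearMap.ker (LinearMap.mul' ℂ A), projNorm A r ≤ C ∧
      ∀ u ∈ S, projNorm A (opMul A u r - u) < ε

lemma isAmenable_iff (A : Type*) [NonUnitalNormedRing A] [NormedSpace ℂ A]
    [IsScalarTower ℂ A A] [SMulCommClass ℂ A A] :
    IsAmenable A ↔ HasBddApproxUnit A ∧ HasBddRightApproxUnitKerMul A :=
  Iff.rfl

lemma opMul_tmul_tmul {A : Type*} [NonUnitalNormedRing A] [NormedSpace ℂ A]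
    [IsScalarTower ℂ A A] [SMulCommClass ℂ A A] (a b c d : A) :
    opMul A (a ⊗ₜ[ℂ] b) (c ⊗ₜ[ℂ] d) = (a * c) ⊗ₜ[ℂ] (d * b) := by
  simp [opMul, TensorProduct.mapBilinear]

noncomputable instance NonUnitalSubalgebra.instNormedSpace {A : Type*} [NonUnitalNormedRing A]
    [NormedSpace ℂ A] (J : NonUnitalSubalgebra ℂ A) : NormedSpace ℂ J :=
  SubmoduleClass.toNormedSpace J

namespace NonUnitalSubalgebra

variable {A : Type*} [NonUnitalNormedRing A] [NormedSpace ℂ A] (J : NonUnitalSubalgebra ℂ A)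

noncomputable def tensorIncl : J ⊗[ℂ] J →ₗ[ℂ] A ⊗[ℂ] A :=
  TensorProduct.map (NonUnitalSubalgebraClass.subtype J : J →ₗ[ℂ] A)
    (NonUnitalSubalgebraClass.subtype J)

@[simp]
lemma tensorIncl_tmul (x y : J) : J.tensorIncl (x ⊗ₜ[ℂ] y) = (x : A) ⊗ₜ[ℂ] (y : A) := rfl

lemma mul'_tensorIncl [IsScalarTower ℂ A A] [SMulCommClass ℂ A A] (v : J ⊗[ℂ] J) :
    LinearMap.mul' ℂ A (J.tensorIncl v) = (LinearMap.mul' ℂ J v : A) := by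
  induction v using TensorProduct.induction_on with
  | zero => simp
  | tmul x y => simp
  | add x y hx hy => simp [hx, hy]

variable {J}

lemma tensorIncl_mem_ker [IsScalarTower ℂ A A] [SMulCommClass ℂ A A] {u : J ⊗[ℂ] J}
    (hu : u ∈ LinearMap.ker (LinearMap.mul' ℂ J)) :
    J.tensorIncl u ∈ LinearMap.ker (LinearMap.mul' ℂ A) := by
  rw [LinearMap.mem_ker] at hu ⊢
  rw [mul'_tensorIncl, hu, ZeroMemClass.coe_zero]

lemma hasBddApproxUnit_of_exists_mem
    (hbai : ∃ C > (0 : ℝ), ∀ ε > (0 : ℝ), ∀ S : Finset A, (∀ x ∈ S, x ∈ J) →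
      ∃ e ∈ J, ‖e‖ ≤ C ∧ ∀ x ∈ S, ‖e * x - x‖ < ε ∧ ‖x * e - x‖ < ε) :
    HasBddApproxUnit J := by
  obtain ⟨C, hC, hbai⟩ := hbai
  refine ⟨C, hC, fun ε hε S => ?_⟩
  obtain ⟨e, heJ, heC, he⟩ := hbai ε hε (S.map (Function.Embedding.subtype _))
    fun x hx => by obtain ⟨y, -, rfl⟩ := Finset.mem_map.mp hx; exact y.2
  exact ⟨⟨e, heJ⟩, heC, fun x hx => he x (Finset.mem_map_of_mem _ hx)⟩

section
variable [SMulCommClass ℂ A A] (hright : ∀ a : A, ∀ x ∈ J, x * a ∈ J)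

def mulLeftToIdeal (z : J) : A →ₗ[ℂ] J where
  toFun a := ⟨z * a, hright a z z.2⟩
  map_add' a b := by ext; simp [mul_add]
  map_smul' c a := by ext; simp [mul_smul_comm]

@[simp]
lemma coe_mulLeftToIdeal (z : J) (a : A) : (mulLeftToIdeal hright z a : A) = z * a := rfl

lemma mulLeftToIdeal_coe (z x : J) : mulLeftToIdeal hright z x = z * x := rfl

end

section
variable [IsScalarTower ℂ A A] (hleft : ∀ a : A, ∀ x ∈ J, a * x ∈ J)

def mulRightToIdeal (z : J) : A →ₗ[ℂ] J where
  toFun a := ⟨a * z, hleft a z z.2⟩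
  map_add' a b := by ext; simp [add_mul]
  map_smul' c a := by ext; simp [smul_mul_assoc]

@[simp]
lemma coe_mulRightToIdeal (z : J) (a : A) : (mulRightToIdeal hleft z a : A) = a * z := rfl

lemma mulRightToIdeal_coe (z x : J) : mulRightToIdeal hleft z x = x * z := rfl

end

section

variable [IsScalarTower ℂ A A] [SMulCommClass ℂ A A]
variable (hleft : ∀ a : A, ∀ x ∈ J, a * x ∈ J) (hright : ∀ a : A, ∀ x ∈ J, x * a ∈ J)

lemma projNorm_map_mulLeftToIdeal_mulRightToIdeal_le (z w : J) (r : A ⊗[ℂ] A) :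
    projNorm J (TensorProduct.map (mulLeftToIdeal hright z) (mulRightToIdeal hleft w) r) ≤
      ‖z‖ * ‖w‖ * projNorm A r := by
  refine projNorm_map_le _ _ (by positivity) (fun a b => ?_) r
  calc ‖(z : A) * a‖ * ‖b * w‖ ≤ (‖z‖ * ‖a‖) * (‖b‖ * ‖w‖) := by
        gcongr <;> exact norm_mul_le _ _
    _ = ‖z‖ * ‖w‖ * (‖a‖ * ‖b‖) := by ring

noncomputable def sandwich (e : J) : A ⊗[ℂ] A →ₗ[ℂ] J ⊗[ℂ] J :=
  TensorProduct.map (mulLeftToIdeal hright e) (mulRightToIdeal hleft e)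

lemma mul'_sandwich (e : J) (r : A ⊗[ℂ] A) :
    (LinearMap.mul' ℂ J (sandwich hleft hright e r) : A) = e * LinearMap.mul' ℂ A r * e := by
  induction r using TensorProduct.induction_on with
  | zero => simp
  | tmul a b => simp [sandwich, mul_assoc]
  | add x y hx hy => simp [hx, hy, mul_add, add_mul]

lemma projNorm_sandwich_le {C : ℝ} {e : J} (hC : ‖e‖ ≤ C) (r : A ⊗[ℂ] A) :
    projNorm J (sandwich hleft hright e r) ≤ C ^ 2 * projNorm A r := by
  refine (projNorm_map_mulLeftToIdeal_mulRightToIdeal_le hleft hright e e r).trans ?_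
  have := projNorm_nonneg r
  have : 0 ≤ C := (norm_nonneg e).trans hC
  rw [sq]
  gcongr

lemma sandwich_mem_ker (e : J) {r : A ⊗[ℂ] A}
    (hr : r ∈ LinearMap.ker (LinearMap.mul' ℂ A)) :
    sandwich hleft hright e r ∈ LinearMap.ker (LinearMap.mul' ℂ J) := by
  rw [LinearMap.mem_ker] at hr ⊢
  exact Subtype.ext <| by rw [mul'_sandwich, hr, mul_zero, zero_mul, ZeroMemClass.coe_zero]

lemma opMul_tmul_sandwich_sub (e p p' : J) (r : A ⊗[ℂ] A) :
    opMul J (p ⊗ₜ[ℂ] p') (sandwich hleft hright e r) -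
        sandwich hleft hright e (opMul A ((p : A) ⊗ₜ[ℂ] (p' : A)) r) =
      TensorProduct.map (mulLeftToIdeal hright (p * e - e * p)) (mulRightToIdeal hleft (e * p')) r +
        TensorProduct.map (mulLeftToIdeal hright (e * p)) (mulRightToIdeal hleft (e * p' - p' * e))
          r := by
  induction r using TensorProduct.induction_on with
  | zero => simp
  | tmul a b =>
    have h₁ : mulLeftToIdeal hright (p * e - e * p) a =
        p * mulLeftToIdeal hright e a - mulLeftToIdeal hright e (p * a) := by
      ext; simp [sub_mul, mul_assoc]
    have h₂ : mulRightToIdeal hleft (e * p') b = mulRightToIdeal hleft e b * p' := by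
      ext; simp [mul_assoc]
    have h₃ : mulLeftToIdeal hright (e * p) a = mulLeftToIdeal hright e (p * a) := by
      ext; simp [mul_assoc]
    have h₄ : mulRightToIdeal hleft (e * p' - p' * e) b =
        mulRightToIdeal hleft e b * p' - mulRightToIdeal hleft e (b * p') := by
      ext; simp [mul_sub, mul_assoc]
    simp only [sandwich, opMul_tmul_tmul, map_tmul, h₁, h₂, h₃, h₄, sub_tmul, tmul_sub]
    abel
  | add x y hx hy =>
    simp only [map_add, add_sub_add_comm, hx, hy, add_add_add_comm]

lemma sandwich_coe_tmul_sub (e p p' : J) :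
    sandwich hleft hright e ((p : A) ⊗ₜ[ℂ] (p' : A)) - p ⊗ₜ[ℂ] p' =
      (e * p - p) ⊗ₜ[ℂ] (p' * e) + p ⊗ₜ[ℂ] (p' * e - p') := by
  simp only [sandwich, map_tmul, mulLeftToIdeal_coe, mulRightToIdeal_coe, sub_tmul, tmul_sub]
  abel

variable {C δ : ℝ} {e : J}

lemma projNorm_opMul_tmul_sandwich_sub_le (hC : ‖e‖ ≤ C) {p p' : J} (hp : ApproxUnitAt δ e p)
    (hp' : ApproxUnitAt δ e p') (r : A ⊗[ℂ] A) :
    projNorm J (opMul J (p ⊗ₜ[ℂ] p') (sandwich hleft hright e r) -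
        sandwich hleft hright e (opMul A ((p : A) ⊗ₜ[ℂ] (p' : A)) r)) ≤
      2 * δ * C * projNorm A r * (‖p‖ + ‖p'‖) := by
  have hδ : 0 ≤ δ := (norm_nonneg _).trans hp.1.le
  have hC₀ : 0 ≤ C := (norm_nonneg _).trans hC
  have hep (x : J) : ‖e * x‖ ≤ C * ‖x‖ := (norm_mul_le _ _).trans (by gcongr)
  have hp'e : ‖e * p' - p' * e‖ ≤ 2 * δ := norm_sub_rev (e * p') _ ▸ hp'.norm_commutator_le
  rw [opMul_tmul_sandwich_sub]
  calc _ ≤ ‖p * e - e * p‖ * ‖e * p'‖ * projNorm A r +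
        ‖e * p‖ * ‖e * p' - p' * e‖ * projNorm A r :=
        (projNorm_add_le _ _).trans <| add_le_add
          (projNorm_map_mulLeftToIdeal_mulRightToIdeal_le hleft hright _ _ r)
          (projNorm_map_mulLeftToIdeal_mulRightToIdeal_le hleft hright _ _ r)
    _ ≤ (2 * δ) * (C * ‖p'‖) * projNorm A r + (C * ‖p‖) * (2 * δ) * projNorm A r := by
        have := projNorm_nonneg r
        gcongr
        exacts [hp.norm_commutator_le, hep p', hep p]
    _ = _ := by ring

lemma projNorm_sandwich_coe_tmul_sub_le (hC : ‖e‖ ≤ C) {p p' : J} (hp : ApproxUnitAt δ e p)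
    (hp' : ApproxUnitAt δ e p') :
    projNorm J (sandwich hleft hright e ((p : A) ⊗ₜ[ℂ] (p' : A)) - p ⊗ₜ[ℂ] p') ≤
      δ * (C + 1) * (‖p‖ + ‖p'‖) := by
  have hδ : 0 ≤ δ := (norm_nonneg _).trans hp.1.le
  have hC₀ : 0 ≤ C := (norm_nonneg _).trans hC
  rw [sandwich_coe_tmul_sub]
  calc _ ≤ ‖e * p - p‖ * ‖p' * e‖ + ‖p‖ * ‖p' * e - p'‖ :=
        (projNorm_add_le _ _).trans (add_le_add (projNorm_tmul_le _ _) (projNorm_tmul_le _ _))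
    _ ≤ δ * (‖p'‖ * C) + ‖p‖ * δ := by
        gcongr
        · exact hp.1.le
        · exact (norm_mul_le _ _).trans (by gcongr)
        · exact hp'.2.le
    _ ≤ δ * (C + 1) * (‖p‖ + ‖p'‖) := by
        nlinarith [mul_nonneg (mul_nonneg hδ hC₀) (norm_nonneg p), mul_nonneg hδ (norm_nonneg p')]

lemma projNorm_opMul_sandwich_sub_le (hC : ‖e‖ ≤ C) {l : List (J × J)}
    (hl : ∀ q ∈ l, ApproxUnitAt δ e q.1 ∧ ApproxUnitAt δ e q.2) {u : J ⊗[ℂ] J}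
    (hu : (l.map fun q => q.1 ⊗ₜ[ℂ] q.2).sum = u) (r : A ⊗[ℂ] A) :
    projNorm J (opMul J u (sandwich hleft hright e r) - u) ≤
      δ * (2 * C * projNorm A r + C + 1) * (l.map fun q => ‖q.1‖ + ‖q.2‖).sum +
        C ^ 2 * projNorm A (opMul A (J.tensorIncl u) r - J.tensorIncl u) := by
  set ψ := sandwich hleft hright e
  set Φ₁ : J ⊗[ℂ] J →ₗ[ℂ] J ⊗[ℂ] J :=
    (opMul J).flip (ψ r) - ψ ∘ₗ (opMul A).flip r ∘ₗ J.tensorIncl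
  set Φ₂ : J ⊗[ℂ] J →ₗ[ℂ] J ⊗[ℂ] J := ψ ∘ₗ J.tensorIncl - LinearMap.id
  have hsplit : opMul J u (ψ r) - u =
      Φ₁ u + Φ₂ u + ψ (opMul A (J.tensorIncl u) r - J.tensorIncl u) := by
    simp only [Φ₁, Φ₂, LinearMap.sub_apply, LinearMap.flip_apply, LinearMap.comp_apply,
      LinearMap.id_apply, map_sub]
    abel
  have h₁ : projNorm J (Φ₁ u) ≤
      (l.map fun q => 2 * δ * C * projNorm A r * (‖q.1‖ + ‖q.2‖)).sum :=
    hu ▸ projNorm_map_list_sum_le Φ₁ l _ _ fun q hq =>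
      projNorm_opMul_tmul_sandwich_sub_le hleft hright hC (hl q hq).1 (hl q hq).2 r
  have h₂ : projNorm J (Φ₂ u) ≤ (l.map fun q => δ * (C + 1) * (‖q.1‖ + ‖q.2‖)).sum :=
    hu ▸ projNorm_map_list_sum_le Φ₂ l _ _ fun q hq =>
      projNorm_sandwich_coe_tmul_sub_le hleft hright hC (hl q hq).1 (hl q hq).2
  have h₃ : projNorm J (ψ (opMul A (J.tensorIncl u) r - J.tensorIncl u)) ≤
      C ^ 2 * projNorm A (opMul A (J.tensorIncl u) r - J.tensorIncl u) :=
    projNorm_sandwich_le hleft hright hC _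
  rw [hsplit]
  refine (projNorm_add_le _ _).trans (add_le_add ((projNorm_add_le _ _).trans
    (add_le_add h₁ h₂)) h₃) |>.trans_eq ?_
  rw [List.sum_map_mul_left, List.sum_map_mul_left]
  ring

end

variable [IsScalarTower ℂ A A] [SMulCommClass ℂ A A]

lemma hasBddRightApproxUnitKerMul (hleft : ∀ a : A, ∀ x ∈ J, a * x ∈ J)
    (hright : ∀ a : A, ∀ x ∈ J, x * a ∈ J) (hA : HasBddRightApproxUnitKerMul A)
    (hJ : HasBddApproxUnit J) : HasBddRightApproxUnitKerMul J := by
  classical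
  obtain ⟨CA, hCA, hA⟩ := hA
  obtain ⟨C, hC, hJ⟩ := hJ
  refine ⟨C ^ 2 * CA, by positivity, fun ε hε S hS => ?_⟩
  choose l hl using fun u : J ⊗[ℂ] J => exists_list_sum_tmul_eq u
  set N : J ⊗[ℂ] J → ℝ := fun u => ((l u).map fun q => ‖q.1‖ + ‖q.2‖).sum
  have hN₀ (u : J ⊗[ℂ] J) : 0 ≤ N u :=
    List.sum_nonneg fun x hx => by
      obtain ⟨q, -, rfl⟩ := List.mem_map.mp hx
      positivity
  obtain ⟨δ, hδ, hδε⟩ := exists_pos_mul_lt (half_pos hε) ((2 * C * CA + C + 1) * ∑ v ∈ S, N v)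
  obtain ⟨ε', hε', hε'ε⟩ := exists_pos_mul_lt (half_pos hε) (C ^ 2)
  obtain ⟨r, hr, hrC, hru⟩ := hA ε' hε' (S.image J.tensorIncl) (by
    simpa using fun u hu => tensorIncl_mem_ker (hS u hu))
  obtain ⟨e, heC, he⟩ := hJ δ hδ (S.biUnion fun u => (l u).toFinset.biUnion fun q => {q.1, q.2})
  have hr₀ := projNorm_nonneg r
  refine ⟨sandwich hleft hright e r, sandwich_mem_ker hleft hright e hr, ?_, fun u hu => ?_⟩
  · exact (projNorm_sandwich_le hleft hright heC r).trans (by gcongr)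
  have hδN : δ * (2 * C * projNorm A r + C + 1) * N u < ε / 2 :=
    calc _ ≤ (2 * C * CA + C + 1) * (∑ v ∈ S, N v) * δ := by
          rw [mul_comm δ, mul_right_comm]
          have := hN₀ u
          gcongr
          exact Finset.single_le_sum (fun v _ => hN₀ v) hu
      _ < ε / 2 := hδε
  have hε'u : C ^ 2 * projNorm A (opMul A (J.tensorIncl u) r - J.tensorIncl u) < ε / 2 :=
    (mul_le_mul_of_nonneg_left (hru _ (Finset.mem_image_of_mem _ hu)).le (sq_nonneg C)).trans_lt
      hε'ε
  have hel : ∀ q ∈ l u, ApproxUnitAt δ e q.1 ∧ ApproxUnitAt δ e q.2 := fun q hq =>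
    ⟨he _ (by simp only [Finset.mem_biUnion]; exact ⟨u, hu, q, by simpa using hq, by simp⟩),
      he _ (by simp only [Finset.mem_biUnion]; exact ⟨u, hu, q, by simpa using hq, by simp⟩)⟩
  calc _ ≤ _ := projNorm_opMul_sandwich_sub_le hleft hright heC hel (hl u) r
    _ < ε / 2 + ε / 2 := add_lt_add hδN hε'u
    _ = ε := add_halves ε

end NonUnitalSubalgebra

theorem ideal_amenable_general (A : Type*) [NonUnitalNormedRing A] [NormedSpace ℂ A]
    [IsScalarTower ℂ A A] [SMulCommClass ℂ A A]
    (hA : IsAmenable A) (J : NonUnitalSubalgebra ℂ A)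
    (hleft : ∀ a : A, ∀ x ∈ J, a * x ∈ J)
    (hright : ∀ a : A, ∀ x ∈ J, x * a ∈ J)
    (hbai : ∃ C > (0 : ℝ), ∀ ε > (0 : ℝ), ∀ S : Finset A, (∀ x ∈ S, x ∈ J) →
      ∃ e ∈ J, ‖e‖ ≤ C ∧ ∀ x ∈ S, ‖e * x - x‖ < ε ∧ ‖x * e - x‖ < ε) :
    @IsAmenable J _ (SubmoduleClass.toNormedSpace (R := ℂ) J) _ _ := by
  have hJ := J.hasBddApproxUnit_of_exists_mem hbai
  exact (isAmenable_iff J).2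
    ⟨hJ, J.hasBddRightApproxUnitKerMul hleft hright ((isAmenable_iff A).1 hA).2 hJ⟩

/-- A closed two-sided ideal with a bounded approximate identity
in an amenable Banach algebra is itself an amenable Banach algebra. -/
theorem ideal_amenable (A : Type*) [NonUnitalNormedRing A] [NormedSpace ℂ A]
    [IsScalarTower ℂ A A] [SMulCommClass ℂ A A] [CompleteSpace A]
    (hA : IsAmenable A) (J : NonUnitalSubalgebra ℂ A)
    (hJclosed : IsClosed (J : Set A))
    (hleft : ∀ a : A, ∀ x ∈ J, a * x ∈ J)
    (hright : ∀ a : A, ∀ x ∈ J, x * a ∈ J)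
    (hbai : ∃ C > (0 : ℝ), ∀ ε > (0 : ℝ), ∀ S : Finset A, (∀ x ∈ S, x ∈ J) →
      ∃ e ∈ J, ‖e‖ ≤ C ∧ ∀ x ∈ S, ‖e * x - x‖ < ε ∧ ‖x * e - x‖ < ε) :
    @IsAmenable J _ (SubmoduleClass.toNormedSpace (R := ℂ) J) _ _ :=
  ideal_amenable_general A hA J hleft hright hbai
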